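/- The separation profile of the infinite Sierpiński graph S satisfies sep^{1/2}_S(n) ≍ n^{log 2 / log 6}: there exist constants c, C > 0 such that c·n^{log 2 / log 6} ≤ sep^{1/2}_S(n) ≤ C·n^{log 2 / log 6} for all sufficiently large n. -/

import Mathlib

open scoped Classical

/-- Reachability within the subgraph of `X` induced on a vertex set `s`. -/
def SimpleGraph.ReachIn {V : Type*} (X : SimpleGraph V) (s : Set V) (v w : V) : Prop :=
  ∃ (hv : v ∈ s) (hw : w ∈ s), (X.induce s).Reachable ⟨v, hv⟩ ⟨w, hw⟩

/-- The vertex set of the connected component of `v` in the subgraph of `X` induced on `s`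
(empty if `v ∉ s`). -/
def SimpleGraph.compIn {V : Type*} (X : SimpleGraph V) (s : Set V) (v : V) : Set V :=
  {w | X.ReachIn s v w}

/-- `T` is a vertex set witnessing `cut¹ᐟ²` for the subgraph of `X` induced on the finite
vertex set `G`: after removing `T` from `G`, every connected component has at most
`|G|/2` vertices. -/
def IsHalfCutSet {V : Type*} (X : SimpleGraph V) (G T : Finset V) : Prop :=
  T ⊆ G ∧ ∀ v : V, 2 * (X.compIn (↑(G \ T)) v).ncard ≤ G.card

/-- `cut¹ᐟ²` of the subgraph of `X` induced on the finite vertex set `G`: the least size of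
a vertex set whose removal leaves all connected components of size at most `|G|/2`. -/
noncomputable def cutHalf {V : Type*} (X : SimpleGraph V) (G : Finset V) : ℕ :=
  sInf {t | ∃ T : Finset V, IsHalfCutSet X G T ∧ T.card = t}

/-- The `1/2`-separation profile of `X`, over finite subgraphs with vertex set inside `W`. -/
noncomputable def sepHalf {V : Type*} (X : SimpleGraph V) (W : Set V) (n : ℕ) : ℕ :=
  sSup {c | ∃ G : Finset V, ↑G ⊆ W ∧ G.card ≤ n ∧ c = cutHalf X G}

/-- The `i`-th digit of `x` in base `b`. -/
def digit (b i x : ℕ) : ℕ := x / b ^ i % b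

/-- Membership in the vertex set of the infinite Sierpinski graph: no position at which
both coordinates have base-3 digit `1`. -/
def SierpMem (p : ℕ × ℕ) : Prop :=
  ∀ i : ℕ, ¬(digit 3 i p.1 = 1 ∧ digit 3 i p.2 = 1)

/-- The infinite Sierpinski graph `S`, with edges between valid points at `ℓ¹`-distance 1. -/
def SierpGraph : SimpleGraph (ℕ × ℕ) where
  Adj p q := SierpMem p ∧ SierpMem q ∧ |(p.1 : ℤ) - q.1| + |(p.2 : ℤ) - q.2| = 1
  symm := by
    constructor
    rintro p q ⟨hp, hq, h⟩
    exact ⟨hq, hp, by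
      rw [abs_sub_comm (q.1 : ℤ) (p.1 : ℤ), abs_sub_comm (q.2 : ℤ) (p.2 : ℤ)]; exact h⟩
  loopless := by constructor; rintro p ⟨-, -, h⟩; simp at h

/-- The vertex set of the sphere `Γ_k`. -/
noncomputable def GammaV (k : ℕ) : Finset (ℕ × ℕ) :=
  (Finset.range (3 ^ k) ×ˢ Finset.range (3 ^ k)).filter SierpMem

/-- The intersection of the vertical line `V_x` with `Γ_k`. -/
def VlineSet (k x : ℕ) : Set (ℕ × ℕ) := {p | p ∈ GammaV k ∧ p.1 = x}

/-- The intersection of the horizontal line `H_y` with `Γ_k`. -/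
def HlineSet (k y : ℕ) : Set (ℕ × ℕ) := {p | p ∈ GammaV k ∧ p.2 = y}

/-- The vertical line `V_x` is complete in `Γ_k`: its intersection with `Γ_k` is connected. -/
def CompleteV (k x : ℕ) : Prop := (SierpGraph.induce (VlineSet k x)).Connected

/-- The horizontal line `H_y` is complete in `Γ_k`: its intersection with `Γ_k` is connected. -/
def CompleteH (k y : ℕ) : Prop := (SierpGraph.induce (HlineSet k y)).Connected

/-- The vertex set of the complete-lines subgraph `C_k` of `Γ_k`. -/
noncomputable def CkV (k : ℕ) : Finset (ℕ × ℕ) :=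
  (GammaV k).filter fun p => CompleteV k p.1 ∨ CompleteH k p.2

/-!
Lower bound: the columns and rows of the square of side `3 ^ k` whose index has no ternary
digit `1` lie entirely in `S`; there are `2 ^ k` of each. Removing fewer than `2 ^ k / 4`
vertices leaves most of these lines untouched, and the untouched lines form a single component
containing more than half of the `≤ 2 · 6 ^ k` vertices.

Upper bound: for a finite `G ⊆ S` and a scale `m = 3 ^ u`, delete from every strip of `m`
consecutive columns (rows) its lightest column (row). This costs `2 |G| / m` vertices and
confines each component to a square of side `3 ^ (u + 1)`. Inside a square of side
`3 ^ (t + 1)`, the lines whose coordinate ends in `t` ternary ones cut it into squares of side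
`3 ^ t`, and the Sierpiński condition leaves only `O(2 ^ t)` points on them; recursing into the
unique component of more than half the size costs `O(2 ^ u)` in total. With `6 ^ u ≈ n` both
costs are `O(n ^ (log 2 / log 6))`.
-/

open Finset

namespace SimpleGraph

variable {V : Type*} {X : SimpleGraph V} {s t : Set V} {u v w : V}

theorem ReachIn.mem_left (h : X.ReachIn s v w) : v ∈ s := h.1

theorem ReachIn.mem_right (h : X.ReachIn s v w) : w ∈ s := h.2.1

theorem ReachIn.refl (hv : v ∈ s) : X.ReachIn s v v := ⟨hv, hv, .rfl⟩

theorem ReachIn.symm (h : X.ReachIn s v w) : X.ReachIn s w v :=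
  let ⟨hv, hw, r⟩ := h; ⟨hw, hv, r.symm⟩

theorem ReachIn.trans (h₁ : X.ReachIn s u v) (h₂ : X.ReachIn s v w) : X.ReachIn s u w :=
  let ⟨hu, _, r₁⟩ := h₁; let ⟨_, hw, r₂⟩ := h₂; ⟨hu, hw, r₁.trans r₂⟩

theorem ReachIn.tail (h : X.ReachIn s v w) (hu : u ∈ s) (hwu : X.Adj w u) : X.ReachIn s v u :=
  h.trans ⟨h.mem_right, hu, (show (X.induce s).Adj ⟨w, h.mem_right⟩ ⟨u, hu⟩ from hwu).reachable⟩

theorem ReachIn.mono (hst : s ⊆ t) (h : X.ReachIn s v w) : X.ReachIn t v w :=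
  let ⟨hv, hw, r⟩ := h; ⟨hst hv, hst hw, r.map (X.induceHomOfLE hst).toHom⟩

theorem ReachIn.induction {φ : V → Prop} (h : X.ReachIn s v w) (h₀ : φ v)
    (step : ∀ a b, X.ReachIn s v a → b ∈ s → X.Adj a b → φ a → φ b) : φ w := by
  obtain ⟨hv, hw, r⟩ := h
  rw [reachable_iff_reflTransGen] at r
  suffices ∀ c : s, Relation.ReflTransGen (X.induce s).Adj ⟨v, hv⟩ c → X.ReachIn s v c ∧ φ c
    from (this _ r).2
  intro c r
  induction r with
  | refl => exact ⟨.refl hv, h₀⟩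
  | @tail a b _ hab ih => exact ⟨ih.1.tail b.2 hab, step a b ih.1 b.2 hab ih.2⟩

theorem compIn_subset : X.compIn s v ⊆ s := fun _ h => h.mem_right

theorem compIn_eq_of_mem (h : w ∈ X.compIn s v) : X.compIn s w = X.compIn s v :=
  Set.ext fun _ => ⟨h.trans, h.symm.trans⟩

theorem compIn_mono (hst : s ⊆ t) : X.compIn s v ⊆ X.compIn t v := fun _ h => h.mono hst

theorem compIn_eq_or_disjoint (v w : V) :
    X.compIn s v = X.compIn s w ∨ Disjoint (X.compIn s v) (X.compIn s w) := by
  refine or_iff_not_imp_right.2 fun h => ?_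
  obtain ⟨u, hv, hw⟩ := Set.not_disjoint_iff.1 h
  rw [← compIn_eq_of_mem hv, compIn_eq_of_mem hw]

theorem compIn_subset_compIn_inter (h : X.compIn s v ⊆ t) :
    X.compIn s v ⊆ X.compIn (s ∩ t) v := fun _ hw =>
  hw.induction (.refl ⟨hw.mem_left, h (.refl hw.mem_left)⟩)
    fun _ _ hva hb hab hva' => hva'.tail ⟨hb, h (hva.tail hb hab)⟩ hab

theorem reachIn_of_adj_path {γ : ℕ → V} {L : ℕ}
    (hadj : ∀ j, j + 1 < L → X.Adj (γ j) (γ (j + 1))) (hs : ∀ j < L, γ j ∈ s) {i j : ℕ}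
    (hi : i < L) (hj : j < L) : X.ReachIn s (γ i) (γ j) := by
  have from_zero : ∀ j < L, X.ReachIn s (γ 0) (γ j) := by
    intro j hj
    induction j with
    | zero => exact .refl (hs 0 hj)
    | succ j ih => exact (ih (by omega)).tail (hs _ hj) (hadj j hj)
  exact (from_zero i hi).symm.trans (from_zero j hj)

theorem ReachIn.lt_add_of_gap {f : V → ℕ} (hf : ∀ p q, X.Adj p q → f q ≤ f p + 1) {L : ℕ}
    (hgap : ∃ a, f v ≤ a ∧ a < f v + L ∧ ∀ p ∈ s, f p ≠ a) (h : X.ReachIn s v w) :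
    f w < f v + L := by
  obtain ⟨a, hva, haL, ha⟩ := hgap
  have : f w ≤ a := h.induction (φ := (f · ≤ a)) hva fun p q hvp hq hpq hp => by
    have := hf p q hpq
    have := ha p hvp.mem_right
    omega
  omega

def SmallComponents (X : SimpleGraph V) (N : ℕ) (s : Set V) : Prop :=
  ∀ v, 2 * (X.compIn s v).ncard ≤ N

theorem compIn_finite {P : Finset V} (hs : s ⊆ P) : (X.compIn s v).Finite :=
  P.finite_toSet.subset (compIn_subset.trans hs)

theorem ncard_compIn_le {P : Finset V} (hs : s ⊆ P) : (X.compIn s v).ncard ≤ #P := by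
  simpa using Set.ncard_le_ncard (compIn_subset.trans hs) P.finite_toSet

theorem smallComponents_of_subset {P : Finset V} {N : ℕ} (hs : s ⊆ P) (hP : 2 * #P ≤ N) :
    X.SmallComponents N s := fun _ => (Nat.mul_le_mul_left 2 (ncard_compIn_le hs)).trans hP

theorem compIn_eq_of_two_mul_ncard_lt {P : Finset V} {N : ℕ} (hs : s ⊆ P) (hPN : #P ≤ N)
    (hv : N < 2 * (X.compIn s v).ncard) (hw : N < 2 * (X.compIn s w).ncard) :
    X.compIn s v = X.compIn s w := by
  refine (compIn_eq_or_disjoint v w).resolve_right fun hdisj => ?_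
  have hunion : (X.compIn s v ∪ X.compIn s w).ncard ≤ #P := by
    simpa using Set.ncard_le_ncard (Set.union_subset (compIn_subset.trans hs)
      (compIn_subset.trans hs)) P.finite_toSet
  rw [Set.ncard_union_eq hdisj (compIn_finite hs) (compIn_finite hs)] at hunion
  omega

/-- As `#P ≤ N`, at most one component of `P \ T₀` is too large, so it is the only one that
needs to be cut further. -/
theorem exists_smallComponents_of_heavy {P T₀ : Finset V} {N b : ℕ} (hPN : #P ≤ N)
    (hT₀ : T₀ ⊆ P)
    (hheavy : ∀ Q ⊆ P, ∀ v, ↑Q = X.compIn (↑P \ ↑T₀) v → N < 2 * #Q →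
      ∃ T' ⊆ Q, #T' ≤ b ∧ X.SmallComponents N (↑Q \ ↑T')) :
    ∃ T ⊆ P, #T ≤ #T₀ + b ∧ X.SmallComponents N (↑P \ ↑T) := by
  set s : Set V := ↑P \ ↑T₀
  have hsP : s ⊆ P := Set.sdiff_subset
  by_cases h : ∃ v₀, N < 2 * (X.compIn s v₀).ncard
  swap
  · simp only [not_exists, not_lt] at h
    exact ⟨T₀, hT₀, by omega, h⟩
  obtain ⟨v₀, hv₀⟩ := h
  set Q := P.filter (· ∈ X.compIn s v₀)
  have hQ : (↑Q : Set V) = X.compIn s v₀ := by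
    rw [coe_filter]
    exact Set.ext fun w => ⟨fun h => h.2, fun h => ⟨hsP (compIn_subset h), h⟩⟩
  obtain ⟨T', hT'Q, hT'b, hT'⟩ :=
    hheavy Q (filter_subset _ _) v₀ hQ (by rwa [← Set.ncard_coe_finset, hQ])
  refine ⟨T₀ ∪ T', union_subset hT₀ (hT'Q.trans (filter_subset _ _)),
    (card_union_le _ _).trans (by omega), fun v => ?_⟩
  have hsub : (↑P \ ↑(T₀ ∪ T') : Set V) ⊆ s := Set.sdiff_subset_sdiff_right (by simp)
  by_cases hv : N < 2 * (X.compIn s v).ncard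
  · have hvQ : X.compIn s v = ↑Q := by
      rw [hQ]
      exact compIn_eq_of_two_mul_ncard_lt hsP hPN hv hv₀
    have hinter : (↑P \ ↑(T₀ ∪ T') : Set V) ∩ ↑Q ⊆ ↑Q \ ↑T' := fun w hw =>
      ⟨hw.2, fun hT' => hw.1.2 (by simp [hT'])⟩
    have hloc := (compIn_subset_compIn_inter ((compIn_mono hsub).trans hvQ.subset)).trans
      (compIn_mono hinter)
    have := Set.ncard_le_ncard hloc (compIn_finite (P := Q) Set.sdiff_subset)
    have := hT' v
    omega
  · have := Set.ncard_le_ncard (compIn_mono (X := X) (v := v) hsub) (compIn_finite hsP)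
    omega

end SimpleGraph

section HalfCut

variable {V : Type*} {X : SimpleGraph V} {G T : Finset V}

theorem isHalfCutSet_iff : IsHalfCutSet X G T ↔ T ⊆ G ∧ X.SmallComponents #G (↑G \ ↑T) := by
  simp [IsHalfCutSet, SimpleGraph.SmallComponents]

theorem isHalfCutSet_self (X : SimpleGraph V) (G : Finset V) : IsHalfCutSet X G G :=
  isHalfCutSet_iff.2 ⟨subset_rfl, SimpleGraph.smallComponents_of_subset (P := ∅) (by simp)
    (by simp)⟩

theorem cutHalf_le (h : IsHalfCutSet X G T) : cutHalf X G ≤ #T := Nat.sInf_le ⟨T, h, rfl⟩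

theorem exists_isHalfCutSet_card_eq_cutHalf (X : SimpleGraph V) (G : Finset V) :
    ∃ T, IsHalfCutSet X G T ∧ #T = cutHalf X G :=
  Nat.sInf_mem (s := {t | ∃ T, IsHalfCutSet X G T ∧ #T = t}) ⟨_, G, isHalfCutSet_self X G, rfl⟩

theorem cutHalf_le_sepHalf {W : Set V} {n : ℕ} (hGW : ↑G ⊆ W) (hGn : #G ≤ n) :
    cutHalf X G ≤ sepHalf X W n :=
  le_csSup ⟨n, by
    rintro _ ⟨G', -, hG'n, rfl⟩
    exact (cutHalf_le (isHalfCutSet_self X G')).trans hG'n⟩ ⟨G, hGW, hGn, rfl⟩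

theorem sepHalf_le {W : Set V} {n c : ℕ}
    (h : ∀ G : Finset V, ↑G ⊆ W → #G ≤ n → cutHalf X G ≤ c) : sepHalf X W n ≤ c :=
  csSup_le ⟨_, ∅, by simp, by simp, rfl⟩ fun _ ⟨G, hGW, hGn, hc⟩ => hc ▸ h G hGW hGn

end HalfCut

section Digits

theorem digit_zero (b x : ℕ) : digit b 0 x = x % b := by simp [digit]

theorem digit_succ (b i x : ℕ) : digit b (i + 1) x = digit b i (x / b) := by
  simp only [digit, Nat.div_div_eq_div_mul, ← pow_succ']

theorem digit_eq_zero_of_lt {b i x : ℕ} (h : x < b ^ i) : digit b i x = 0 := by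
  simp [digit, Nat.div_eq_of_lt h]

theorem digit_mod_pow {b i k : ℕ} (x : ℕ) (h : i < k) : digit b i (x % b ^ k) = digit b i x := by
  rw [digit, digit, show k = i + (k - i) by omega, pow_add, Nat.mod_mul_right_div_self,
    Nat.mod_mod_of_dvd _ (dvd_pow_self b (by omega))]

noncomputable def cantorFinset (k : ℕ) : Finset ℕ :=
  (range (3 ^ k)).filter fun x => ∀ i, digit 3 i x ≠ 1

theorem mem_cantorFinset {k x : ℕ} : x ∈ cantorFinset k ↔ x < 3 ^ k ∧ ∀ i, digit 3 i x ≠ 1 := by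
  simp [cantorFinset]

theorem card_cantorFinset (k : ℕ) : #(cantorFinset k) = 2 ^ k := by
  induction k with
  | zero =>
    rw [show cantorFinset 0 = {0} from Finset.ext fun x => by
      simp only [mem_cantorFinset, pow_zero, Nat.lt_one_iff, mem_singleton]
      exact ⟨And.left, fun hx => ⟨hx, fun i => by simp [digit, hx]⟩⟩]
    rfl
  | succ k ih =>
    have : #(cantorFinset (k + 1)) = #(({0, 2} : Finset ℕ) ×ˢ cantorFinset k) := by
      refine card_bij' (fun x _ => (x % 3, x / 3)) (fun p _ => p.1 + 3 * p.2) ?_ ?_ ?_ ?_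
      · intro x hx
        obtain ⟨hx, hd⟩ := mem_cantorFinset.1 hx
        have h0 := hd 0
        rw [digit_zero] at h0
        simp only [mem_product, mem_insert, mem_singleton, mem_cantorFinset]
        exact ⟨by omega, by omega, fun i => by simpa [digit_succ] using hd (i + 1)⟩
      · rintro ⟨d, y⟩ hp
        simp only [mem_product, mem_insert, mem_singleton, mem_cantorFinset] at hp
        obtain ⟨hd, hy, hyd⟩ := hp
        refine mem_cantorFinset.2 ⟨by rw [pow_succ]; omega, fun i => ?_⟩
        cases i with
        | zero => rw [digit_zero]; omega
        | succ i => rw [digit_succ, show (d + 3 * y) / 3 = y by omega]; exact hyd i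
      · intro x _
        simp only
        omega
      · rintro ⟨d, y⟩ hp
        simp only [mem_product, mem_insert, mem_singleton] at hp
        simp only [Prod.mk.injEq]
        omega
    rw [this, card_product, ih, pow_succ, mul_comm]
    rfl

def ternaryRepunit : ℕ → ℕ
  | 0 => 0
  | t + 1 => 3 * ternaryRepunit t + 1

theorem ternaryRepunit_lt (t : ℕ) : ternaryRepunit t < 3 ^ t := by
  induction t with
  | zero => simp [ternaryRepunit]
  | succ t ih => rw [ternaryRepunit, pow_succ]; omega

theorem digit_eq_one_of_mod_eq_ternaryRepunit {t x : ℕ} (hx : x % 3 ^ t = ternaryRepunit t)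
    {i : ℕ} (hi : i < t) : digit 3 i x = 1 := by
  induction t generalizing x i with
  | zero => omega
  | succ t ih =>
    rw [pow_succ', Nat.mod_mul, ternaryRepunit] at hx
    have := ternaryRepunit_lt t
    have := Nat.mod_lt (x / 3) (pow_pos (by norm_num : 0 < 3) t)
    cases i with
    | zero => rw [digit_zero]; omega
    | succ i => rw [digit_succ]; exact ih (by omega) (by omega)

theorem mod_mem_cantorFinset {t x y : ℕ} (hxy : ∀ i, ¬(digit 3 i x = 1 ∧ digit 3 i y = 1))
    (hx : x % 3 ^ t = ternaryRepunit t) : y % 3 ^ t ∈ cantorFinset t := by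
  refine mem_cantorFinset.2 ⟨Nat.mod_lt _ (by positivity), fun i => ?_⟩
  by_cases hi : i < t
  · rw [digit_mod_pow y hi]
    exact fun hy => hxy i ⟨digit_eq_one_of_mod_eq_ternaryRepunit hx hi, hy⟩
  · rw [digit_eq_zero_of_lt ((Nat.mod_lt _ (by positivity)).trans_le
      (Nat.pow_le_pow_right (by norm_num) (by omega)))]
    omega

end Digits

section Squares

theorem card_filter_mod_mem_le (a c : ℕ) {M : ℕ} (hM : 0 < M) (B : Finset ℕ) :
    #{x ∈ Ico a (a + c * M) | x % M ∈ B} ≤ #B * (c + 1) := by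
  calc #{x ∈ Ico a (a + c * M) | x % M ∈ B}
      ≤ #(B ×ˢ Icc (a / M) (a / M + c)) := by
        refine card_le_card_of_injOn (fun x => (x % M, x / M)) (fun x hx => ?_)
          fun x _ y _ h => ?_
        · rw [mem_coe, mem_filter, mem_Ico] at hx
          have : x / M ≤ (a + c * M) / M := Nat.div_le_div_right hx.1.2.le
          rw [Nat.add_mul_div_right _ _ hM] at this
          simp only [coe_product, coe_Icc, Set.mem_prod, Set.mem_Icc, mem_coe]
          exact ⟨hx.2, Nat.div_le_div_right hx.1.1, this⟩
        · simp only [Prod.mk.injEq] at h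
          rw [← Nat.div_add_mod x M, ← Nat.div_add_mod y M, h.1, h.2]
    _ = #B * (c + 1) := by rw [card_product, Nat.card_Icc]; congr 1; omega

theorem exists_mod_eq_of_lt (v : ℕ) {M r : ℕ} (hr : r < M) :
    ∃ a, v ≤ a ∧ a < v + M ∧ a % M = r := by
  have e := Nat.div_add_mod v M
  have hv := Nat.mod_lt v (hr.trans_le' (Nat.zero_le r))
  by_cases h : v % M ≤ r
  · exact ⟨M * (v / M) + r, by omega, by omega, by rw [Nat.mul_add_mod, Nat.mod_eq_of_lt hr]⟩
  · refine ⟨M * (v / M + 1) + r, by rw [mul_add]; omega, by rw [mul_add]; omega, ?_⟩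
    rw [Nat.mul_add_mod, Nat.mod_eq_of_lt hr]

def InSquare (L : ℕ) (P : Finset (ℕ × ℕ)) : Prop :=
  ∃ x₀ y₀, ∀ p ∈ P, p.1 ∈ Ico x₀ (x₀ + L) ∧ p.2 ∈ Ico y₀ (y₀ + L)

theorem InSquare.mono {L L' : ℕ} {P : Finset (ℕ × ℕ)} (h : InSquare L P) (hL : L ≤ L') :
    InSquare L' P := by
  obtain ⟨x₀, y₀, h⟩ := h
  refine ⟨x₀, y₀, fun p hp => ?_⟩
  simp only [mem_Ico] at h ⊢
  have := h p hp
  omega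

theorem inSquare_of_forall_lt {L : ℕ} {P : Finset (ℕ × ℕ)}
    (h : ∀ p ∈ P, ∀ q ∈ P, q.1 < p.1 + L ∧ q.2 < p.2 + L) : InSquare L P := by
  rcases P.eq_empty_or_nonempty with rfl | hP
  · exact ⟨0, 0, by simp⟩
  obtain ⟨p, hp, hpmin⟩ := P.exists_min_image Prod.fst hP
  obtain ⟨q, hq, hqmin⟩ := P.exists_min_image Prod.snd hP
  exact ⟨p.1, q.2, fun r hr => by
    simp only [mem_Ico]
    exact ⟨⟨hpmin r hr, (h p hp r hr).1⟩, ⟨hqmin r hr, (h q hq r hr).2⟩⟩⟩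

theorem card_le_one_of_inSquare_one {P : Finset (ℕ × ℕ)} (h : InSquare 1 P) : #P ≤ 1 := by
  obtain ⟨x₀, y₀, h⟩ := h
  refine card_le_one.2 fun p hp q hq => ?_
  have := h p hp
  have := h q hq
  simp only [mem_Ico] at *
  ext <;> omega

theorem card_filter_mod_mem_le_of_inSquare {c M : ℕ} (hM : 0 < M) {P : Finset (ℕ × ℕ)}
    (hP : InSquare (c * M) P) (B B' : Finset ℕ) :
    #{p ∈ P | p.1 % M ∈ B ∧ p.2 % M ∈ B'} ≤ #B * (c + 1) * (#B' * (c + 1)) := by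
  obtain ⟨x₀, y₀, hP⟩ := hP
  calc #{p ∈ P | p.1 % M ∈ B ∧ p.2 % M ∈ B'}
      ≤ #({x ∈ Ico x₀ (x₀ + c * M) | x % M ∈ B} ×ˢ
          {y ∈ Ico y₀ (y₀ + c * M) | y % M ∈ B'}) :=
        card_le_card fun p hp => by
          obtain ⟨hp, h1, h2⟩ := mem_filter.1 hp
          simp only [mem_product, mem_filter]
          exact ⟨⟨(hP p hp).1, h1⟩, (hP p hp).2, h2⟩
    _ ≤ _ := by
      rw [card_product]
      exact Nat.mul_le_mul (card_filter_mod_mem_le _ _ hM B) (card_filter_mod_mem_le _ _ hM B')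

end Squares

section SierpinskiGraph

open SimpleGraph

theorem sierpGraph_adj_fst_le {p q : ℕ × ℕ} (h : SierpGraph.Adj p q) : q.1 ≤ p.1 + 1 := by
  have := h.2.2
  have := neg_abs_le ((p.1 : ℤ) - q.1)
  have := abs_nonneg ((p.2 : ℤ) - q.2)
  omega

theorem sierpGraph_adj_snd_le {p q : ℕ × ℕ} (h : SierpGraph.Adj p q) : q.2 ≤ p.2 + 1 := by
  have := h.2.2
  have := neg_abs_le ((p.2 : ℤ) - q.2)
  have := abs_nonneg ((p.1 : ℤ) - q.1)
  omega

theorem sierpGraph_adj_succ_snd {x y : ℕ} (h₁ : SierpMem (x, y)) (h₂ : SierpMem (x, y + 1)) :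
    SierpGraph.Adj (x, y) (x, y + 1) :=
  ⟨h₁, h₂, by simp⟩

theorem sierpGraph_adj_succ_fst {x y : ℕ} (h₁ : SierpMem (x, y)) (h₂ : SierpMem (x + 1, y)) :
    SierpGraph.Adj (x, y) (x + 1, y) :=
  ⟨h₁, h₂, by simp⟩

variable {s : Set (ℕ × ℕ)}

theorem reachIn_column (hs : s ⊆ {p | SierpMem p}) {x L : ℕ} (hx : ∀ j < L, (x, j) ∈ s)
    {i j : ℕ} (hi : i < L) (hj : j < L) : SierpGraph.ReachIn s (x, i) (x, j) :=
  reachIn_of_adj_path (γ := fun j => (x, j))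
    (fun j hj => sierpGraph_adj_succ_snd (hs (hx j (by omega))) (hs (hx (j + 1) hj))) hx hi hj

theorem reachIn_row (hs : s ⊆ {p | SierpMem p}) {y L : ℕ} (hy : ∀ j < L, (j, y) ∈ s)
    {i j : ℕ} (hi : i < L) (hj : j < L) : SierpGraph.ReachIn s (i, y) (j, y) :=
  reachIn_of_adj_path (γ := fun j => (j, y))
    (fun j hj => sierpGraph_adj_succ_fst (hs (hy j (by omega))) (hs (hy (j + 1) hj))) hy hi hj

theorem coe_grid_subset_compIn (hs : s ⊆ {p | SierpMem p}) {U W : Finset ℕ} {L : ℕ}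
    (hUL : U ⊆ range L) (hWL : W ⊆ range L)
    (hU : ∀ x ∈ U, ∀ j < L, (x, j) ∈ s) (hW : ∀ y ∈ W, ∀ j < L, (j, y) ∈ s)
    {x₀ y₀ : ℕ} (hx₀ : x₀ ∈ U) (hy₀ : y₀ ∈ W) :
    ↑(U ×ˢ range L ∪ range L ×ˢ W) ⊆ SierpGraph.compIn s (x₀, y₀) := by
  have hx₀L := mem_range.1 (hUL hx₀)
  have hy₀L := mem_range.1 (hWL hy₀)
  rintro ⟨x, y⟩ hp
  simp only [coe_union, coe_product, coe_range, Set.mem_union, Set.mem_prod, mem_coe,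
    Set.mem_Iio] at hp
  rcases hp with ⟨hx, hy⟩ | ⟨hx, hy⟩
  · exact (reachIn_row hs (hW y₀ hy₀) hx₀L (mem_range.1 (hUL hx))).trans
      (reachIn_column hs (hU x hx) hy₀L hy)
  · exact (reachIn_column hs (hU x₀ hx₀) hy₀L (mem_range.1 (hWL hy))).trans
      (reachIn_row hs (hW y hy) hx₀L hx)

theorem inSquare_of_coe_eq_compIn {L : ℕ}
    (hfst : ∀ p ∈ s, ∃ a, p.1 ≤ a ∧ a < p.1 + L ∧ ∀ q ∈ s, q.1 ≠ a)
    (hsnd : ∀ p ∈ s, ∃ a, p.2 ≤ a ∧ a < p.2 + L ∧ ∀ q ∈ s, q.2 ≠ a)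
    {Q : Finset (ℕ × ℕ)} {v : ℕ × ℕ} (hQ : ↑Q = SierpGraph.compIn s v) : InSquare L Q := by
  refine inSquare_of_forall_lt fun p hp q hq => ?_
  rw [← mem_coe, hQ] at hp hq
  have hpq : SierpGraph.ReachIn s p q := hp.symm.trans hq
  exact ⟨hpq.lt_add_of_gap (fun _ _ => sierpGraph_adj_fst_le) (hfst p hpq.mem_left),
    hpq.lt_add_of_gap (fun _ _ => sierpGraph_adj_snd_le) (hsnd p hpq.mem_left)⟩

end SierpinskiGraph

section LowerBound

open SimpleGraph

noncomputable def cantorLines (k : ℕ) : Finset (ℕ × ℕ) :=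
  cantorFinset k ×ˢ range (3 ^ k) ∪ range (3 ^ k) ×ˢ cantorFinset k

theorem cantorFinset_subset_range (k : ℕ) : cantorFinset k ⊆ range (3 ^ k) :=
  filter_subset _ _

theorem coe_cantorLines_subset (k : ℕ) : ↑(cantorLines k) ⊆ {p : ℕ × ℕ | SierpMem p} := by
  intro p hp
  simp only [cantorLines, coe_union, coe_product, Set.mem_union, Set.mem_prod, mem_coe,
    mem_cantorFinset] at hp
  rcases hp with ⟨⟨-, h⟩, -⟩ | ⟨-, ⟨-, h⟩⟩
  · exact fun i hi => h i hi.1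
  · exact fun i hi => h i hi.2

theorem card_cantorLines_le (k : ℕ) : #(cantorLines k) ≤ 2 * 6 ^ k := by
  calc #(cantorLines k) ≤ 2 ^ k * 3 ^ k + 3 ^ k * 2 ^ k := by
        unfold cantorLines
        simpa [card_cantorFinset] using
          card_union_le (cantorFinset k ×ˢ range (3 ^ k)) (range (3 ^ k) ×ˢ cantorFinset k)
    _ = 2 * 6 ^ k := by rw [show (6 : ℕ) = 2 * 3 from rfl, mul_pow]; ring

theorem two_pow_mul_le_card_cantorLines (k : ℕ) : 2 ^ k * 3 ^ k ≤ #(cantorLines k) := by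
  unfold cantorLines
  simpa [card_cantorFinset] using
    card_le_card (subset_union_left (s₁ := cantorFinset k ×ˢ range (3 ^ k))
      (s₂ := range (3 ^ k) ×ˢ cantorFinset k))

theorem nonempty_sdiff_image {α β : Type*} [DecidableEq β] {C : Finset β} {T : Finset α}
    (f : α → β) (h : #T < #C) : (C \ T.image f).Nonempty := by
  rw [← card_pos]
  have := card_le_card_sdiff_add_card (s := C) (t := T.image f)
  have := card_image_le (s := T) (f := f)
  omega

theorem card_cantorLines_le_add (k : ℕ) (A B : Finset ℕ) :
    #(cantorLines k) ≤ #((cantorFinset k \ A) ×ˢ range (3 ^ k) ∪ range (3 ^ k) ×ˢ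
      (cantorFinset k \ B)) + (#A + #B) * 3 ^ k := by
  set F := (cantorFinset k \ A) ×ˢ range (3 ^ k) ∪ range (3 ^ k) ×ˢ (cantorFinset k \ B)
  have hsub : cantorLines k \ F ⊆ A ×ˢ range (3 ^ k) ∪ range (3 ^ k) ×ˢ B := by
    intro p hp
    simp only [F, cantorLines, mem_sdiff, mem_union, mem_product, not_or, not_and] at hp ⊢
    tauto
  calc #(cantorLines k) ≤ #(cantorLines k \ F) + #F := card_le_card_sdiff_add_card
    _ ≤ #A * 3 ^ k + 3 ^ k * #B + #F := by
      grw [card_le_card hsub, card_union_le, card_product, card_product, card_range]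
    _ = #F + (#A + #B) * 3 ^ k := by ring

/-- The columns and rows missed by `T` form one component, which is too large unless
`T` meets a quarter of the Cantor lines. -/
theorem two_pow_le_four_mul_card {k : ℕ} {T : Finset (ℕ × ℕ)}
    (hT : IsHalfCutSet SierpGraph (cantorLines k) T) : 2 ^ k ≤ 4 * #T := by
  by_contra! hlt
  obtain ⟨-, hcut⟩ := isHalfCutSet_iff.1 hT
  set G := cantorLines k
  set U := cantorFinset k \ T.image Prod.fst
  set W := cantorFinset k \ T.image Prod.snd
  obtain ⟨x₀, hx₀⟩ : U.Nonempty := nonempty_sdiff_image _ (by rw [card_cantorFinset]; omega)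
  obtain ⟨y₀, hy₀⟩ : W.Nonempty := nonempty_sdiff_image _ (by rw [card_cantorFinset]; omega)
  set F := U ×ˢ range (3 ^ k) ∪ range (3 ^ k) ×ˢ W
  have hF : ↑F ⊆ SierpGraph.compIn (↑G \ ↑T) (x₀, y₀) := by
    refine coe_grid_subset_compIn (Set.sdiff_subset.trans (coe_cantorLines_subset k))
      (sdiff_subset.trans (cantorFinset_subset_range k))
      (sdiff_subset.trans (cantorFinset_subset_range k)) (fun x hx j hj => ?_)
      (fun y hy j hj => ?_) hx₀ hy₀
    · obtain ⟨hxC, hxT⟩ := mem_sdiff.1 hx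
      exact ⟨by simp [cantorLines, hxC, hj],
        fun h => hxT (mem_image_of_mem Prod.fst (mem_coe.1 h))⟩
    · obtain ⟨hyC, hyT⟩ := mem_sdiff.1 hy
      exact ⟨by simp [cantorLines, hyC, hj],
        fun h => hyT (mem_image_of_mem Prod.snd (mem_coe.1 h))⟩
  have hFG : 2 * #F ≤ #G := by
    have := Set.ncard_le_ncard hF (compIn_finite (P := G) Set.sdiff_subset)
    rw [Set.ncard_coe_finset] at this
    have := hcut (x₀, y₀)
    omega
  have hGF : #G ≤ #F + (#T + #T) * 3 ^ k :=
    (card_cantorLines_le_add k (T.image Prod.fst) (T.image Prod.snd)).trans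
      (by grw [card_image_le, card_image_le])
  have : 2 ^ k * 3 ^ k ≤ 4 * #T * 3 ^ k := by
    linarith [two_pow_mul_le_card_cantorLines k]
  exact absurd (Nat.le_of_mul_le_mul_right this (by positivity)) (by omega)

theorem two_pow_le_four_mul_cutHalf (k : ℕ) :
    2 ^ k ≤ 4 * cutHalf SierpGraph (cantorLines k) := by
  obtain ⟨T, hT, hTc⟩ := exists_isHalfCutSet_card_eq_cutHalf SierpGraph (cantorLines k)
  exact hTc ▸ two_pow_le_four_mul_card hT

end LowerBound

section CheapLines

variable {α : Type*} (G : Finset α) (f : α → ℕ) {m : ℕ}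

theorem exists_cheap_level (hm : 0 < m) (c : ℕ) :
    ∃ a, a / m = c ∧ m * #{p ∈ G | f p = a} ≤ #{p ∈ G | f p / m = c} := by
  set block := Ico (c * m) ((c + 1) * m)
  have hblock : ∀ a, a ∈ block ↔ a / m = c := fun a => by
    rw [mem_Ico]
    refine ⟨fun h => Nat.div_eq_of_lt_le h.1 h.2, ?_⟩
    rintro rfl
    exact ⟨Nat.div_mul_le_self a m, by rw [add_mul, one_mul]; exact Nat.lt_div_mul_add hm⟩
  have hsum : ∑ a ∈ block, m * #{p ∈ G | f p = a} ≤ ∑ _a ∈ block, #{p ∈ G | f p / m = c} := by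
    rw [← mul_sum, sum_const, smul_eq_mul, Nat.card_Ico, show (c + 1) * m - c * m = m by
      rw [add_mul, one_mul, Nat.add_sub_cancel_left]]
    refine Nat.mul_le_mul_left m (le_of_eq ?_)
    rw [card_eq_sum_card_fiberwise (f := f) (t := block) fun p hp => (hblock _).2
      (mem_filter.1 hp).2]
    refine sum_congr rfl fun a ha => congrArg card (Finset.ext fun p => ?_)
    simp only [mem_filter, and_assoc]
    exact and_congr_right fun _ => ⟨fun h => ⟨h ▸ (hblock a).1 ha, h⟩, And.right⟩
  obtain ⟨a, ha, hle⟩ := exists_le_of_sum_le ⟨c * m, by simp [block]; nlinarith⟩ hsum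
  exact ⟨a, (hblock a).1 ha, hle⟩

theorem mul_card_filter_eq_cheap_le {a : ℕ → ℕ}
    (ha : ∀ c, m * #{p ∈ G | f p = a c} ≤ #{p ∈ G | f p / m = c}) :
    m * #{p ∈ G | f p = a (f p / m)} ≤ #G := by
  rw [card_eq_sum_card_image (f · / m) G, card_eq_sum_card_image (f · / m), mul_sum]
  refine sum_le_sum_of_subset_of_nonneg (image_subset_image (filter_subset _ _))
    (fun _ _ _ => Nat.zero_le _) |>.trans' (sum_le_sum fun c _ => ?_)
  refine (Nat.mul_le_mul_left m (card_le_card fun p hp => ?_)).trans (ha c)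
  simp only [mem_filter] at hp ⊢
  exact ⟨hp.1.1, hp.2 ▸ hp.1.2⟩

end CheapLines

section UpperBound

open SimpleGraph

theorem exists_gap_of_mod_ne {α : Type*} (f : α → ℕ) {M r : ℕ} (hr : r < M) {s : Set α}
    (hs : ∀ q ∈ s, f q % M ≠ r) (p : α) : ∃ a, f p ≤ a ∧ a < f p + M ∧ ∀ q ∈ s, f q ≠ a := by
  obtain ⟨a, hpa, haM, har⟩ := exists_mod_eq_of_lt (f p) hr
  exact ⟨a, hpa, haM, fun q hq hqa => hs q hq (hqa ▸ har)⟩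

theorem exists_gap_of_ne_cheap {α : Type*} (f : α → ℕ) {m : ℕ} (hm : 0 < m) {a : ℕ → ℕ}
    (ha : ∀ c, a c / m = c) {s : Set α} (hs : ∀ q ∈ s, f q ≠ a (f q / m)) (p : α) :
    ∃ b, f p ≤ b ∧ b < f p + 2 * m ∧ ∀ q ∈ s, f q ≠ b := by
  have hb := Nat.div_add_mod (a (f p / m + 1)) m
  have hp := Nat.div_add_mod (f p) m
  rw [ha, mul_add, mul_one] at hb
  have := Nat.mod_lt (a (f p / m + 1)) hm
  have := Nat.mod_lt (f p) hm
  refine ⟨a (f p / m + 1), by omega, by omega, fun q hq hqb => hs q hq ?_⟩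
  rw [hqb, ha]

theorem card_filter_mod_eq_ternaryRepunit_le {t : ℕ} {P : Finset (ℕ × ℕ)}
    (hP : ↑P ⊆ {p : ℕ × ℕ | SierpMem p}) (hsq : InSquare (3 * 3 ^ t) P) :
    #{p ∈ P | p.1 % 3 ^ t = ternaryRepunit t ∨ p.2 % 3 ^ t = ternaryRepunit t} ≤
      32 * 2 ^ t := by
  set r := ternaryRepunit t
  set R : Finset ℕ := {r}
  have hsub : {p ∈ P | p.1 % 3 ^ t = r ∨ p.2 % 3 ^ t = r} ⊆
      {p ∈ P | p.1 % 3 ^ t ∈ R ∧ p.2 % 3 ^ t ∈ cantorFinset t} ∪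
        {p ∈ P | p.1 % 3 ^ t ∈ cantorFinset t ∧ p.2 % 3 ^ t ∈ R} := by
    intro p hp
    obtain ⟨hpP, hpr⟩ := mem_filter.1 hp
    have hS : SierpMem p := hP hpP
    simp only [R, mem_union, mem_filter, mem_singleton]
    rcases hpr with h | h
    · exact .inl ⟨hpP, h, mod_mem_cantorFinset hS h⟩
    · exact .inr ⟨hpP, mod_mem_cantorFinset (fun i hi => hS i hi.symm) h, h⟩
  have h₁ := card_filter_mod_mem_le_of_inSquare (by positivity) hsq R (cantorFinset t)
  have h₂ := card_filter_mod_mem_le_of_inSquare (by positivity) hsq (cantorFinset t) R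
  rw [card_singleton, card_cantorFinset] at h₁ h₂
  grw [card_le_card hsub, card_union_le, h₁, h₂]
  ring_nf
  rfl

theorem exists_cut_of_inSquare (t : ℕ) {P : Finset (ℕ × ℕ)}
    (hP : ↑P ⊆ {p : ℕ × ℕ | SierpMem p}) (hsq : InSquare (3 ^ t) P) {N : ℕ} (hPN : #P ≤ N) :
    ∃ T ⊆ P, #T ≤ 64 * 2 ^ t ∧ SierpGraph.SmallComponents N (↑P \ ↑T) := by
  induction t generalizing P with
  | zero =>
    refine ⟨P, subset_rfl, ?_, smallComponents_of_subset (P := ∅) (by simp) (by simp)⟩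
    have := card_le_one_of_inSquare_one (by simpa using hsq)
    omega
  | succ t ih =>
    set r := ternaryRepunit t
    set T₀ := P.filter fun p => p.1 % 3 ^ t = r ∨ p.2 % 3 ^ t = r
    have hT₀ : #T₀ ≤ 32 * 2 ^ t :=
      card_filter_mod_eq_ternaryRepunit_le hP (by rwa [← pow_succ'])
    have hs : ∀ q ∈ (↑P \ ↑T₀ : Set (ℕ × ℕ)), q.1 % 3 ^ t ≠ r ∧ q.2 % 3 ^ t ≠ r :=
      fun q hq => not_or.1 fun h => hq.2 (mem_filter.2 ⟨hq.1, h⟩)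
    have hr := ternaryRepunit_lt t
    obtain ⟨T, hTP, hTcard, hT⟩ := exists_smallComponents_of_heavy (X := SierpGraph) (T₀ := T₀)
      (b := 64 * 2 ^ t) hPN (filter_subset _ _) fun Q hQP _ hQ _ =>
        ih (fun q hq => hP (hQP hq)) (inSquare_of_coe_eq_compIn
          (fun _ _ => exists_gap_of_mod_ne Prod.fst hr (fun q hq => (hs q hq).1) _)
          (fun _ _ => exists_gap_of_mod_ne Prod.snd hr (fun q hq => (hs q hq).2) _) hQ)
          ((card_le_card hQP).trans hPN)
    exact ⟨T, hTP, by rw [pow_succ]; omega, hT⟩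

theorem exists_cut (G : Finset (ℕ × ℕ)) (hG : ↑G ⊆ {p : ℕ × ℕ | SierpMem p}) (u : ℕ) :
    ∃ T ⊆ G, 3 ^ u * #T ≤ 2 * #G + 3 ^ u * (128 * 2 ^ u) ∧
      SierpGraph.SmallComponents #G (↑G \ ↑T) := by
  set m := 3 ^ u
  have hm : 0 < m := by positivity
  choose aC haC hC using exists_cheap_level G Prod.fst hm
  choose aR haR hR using exists_cheap_level G Prod.snd hm
  set T₁ := G.filter fun p => p.1 = aC (p.1 / m) ∨ p.2 = aR (p.2 / m)
  have hT₁ : m * #T₁ ≤ 2 * #G := by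
    grw [show T₁ = _ from filter_or _ _ _, card_union_le, mul_add,
      mul_card_filter_eq_cheap_le G Prod.fst hC, mul_card_filter_eq_cheap_le G Prod.snd hR]
    omega
  have hs : ∀ q ∈ (↑G \ ↑T₁ : Set (ℕ × ℕ)), q.1 ≠ aC (q.1 / m) ∧ q.2 ≠ aR (q.2 / m) :=
    fun q hq => not_or.1 fun h => hq.2 (mem_filter.2 ⟨hq.1, h⟩)
  obtain ⟨T, hTG, hTcard, hT⟩ := exists_smallComponents_of_heavy (X := SierpGraph) (T₀ := T₁)
    (b := 128 * 2 ^ u) le_rfl (filter_subset _ _) fun Q hQG _ hQ _ => by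
      have hsq : InSquare (2 * m) Q := inSquare_of_coe_eq_compIn
        (fun _ _ => exists_gap_of_ne_cheap Prod.fst hm haC (fun q hq => (hs q hq).1) _)
        (fun _ _ => exists_gap_of_ne_cheap Prod.snd hm haR (fun q hq => (hs q hq).2) _) hQ
      obtain ⟨T, hTQ, hTcard, hT⟩ := exists_cut_of_inSquare (u + 1) (fun q hq => hG (hQG hq))
        (hsq.mono (by rw [pow_succ]; omega)) (card_le_card hQG)
      exact ⟨T, hTQ, by rw [pow_succ] at hTcard; omega, hT⟩
  refine ⟨T, hTG, ?_, hT⟩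
  grw [hTcard, mul_add, hT₁]

end UpperBound

section Profile

open SimpleGraph

theorem sepHalf_le_of_lt_six_pow {n ℓ : ℕ} (hn : n < 6 ^ (ℓ + 1)) :
    sepHalf SierpGraph {p | SierpMem p} n ≤ 140 * 2 ^ ℓ := by
  refine sepHalf_le fun G hG hGn => ?_
  obtain ⟨T, hTG, hTcard, hT⟩ := exists_cut G hG ℓ
  refine (cutHalf_le (isHalfCutSet_iff.2 ⟨hTG, hT⟩)).trans
    (Nat.le_of_mul_le_mul_left (c := 3 ^ ℓ) ?_ (by positivity))
  have : 2 * 6 ^ (ℓ + 1) = 3 ^ ℓ * (12 * 2 ^ ℓ) := by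
    rw [pow_succ, show (6 : ℕ) = 2 * 3 from rfl, mul_pow]; ring
  have : 3 ^ ℓ * (140 * 2 ^ ℓ) = 3 ^ ℓ * (12 * 2 ^ ℓ) + 3 ^ ℓ * (128 * 2 ^ ℓ) := by ring
  omega

theorem two_pow_le_eight_mul_sepHalf {n k : ℕ} (hk : 0 < k) (hn : 6 ^ k ≤ n) :
    2 ^ k ≤ 8 * sepHalf SierpGraph {p | SierpMem p} n := by
  obtain ⟨j, rfl⟩ := Nat.exists_eq_add_of_lt hk
  rw [zero_add] at hn ⊢
  have hcard : #(cantorLines j) ≤ n := (card_cantorLines_le j).trans (by rw [pow_succ] at hn; omega)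
  have := cutHalf_le_sepHalf (X := SierpGraph) (coe_cantorLines_subset j) hcard
  have := two_pow_le_four_mul_cutHalf j
  rw [pow_succ]
  omega

theorem six_pow_rpow (k : ℕ) : ((6 : ℝ) ^ k) ^ (Real.log 2 / Real.log 6) = 2 ^ k := by
  rw [← Real.rpow_pow_comm (by norm_num), ← Real.logb,
    Real.rpow_logb (by norm_num) (by norm_num) (by norm_num)]

end Profile

/-- The separation profile of the infinite Sierpinski graph satisfies
`sep¹ᐟ²_S(n) ≍ n^(log 2 / log 6)`. -/
theorem sierpinski_sep :
    ∃ c C : ℝ, 0 < c ∧ 0 < C ∧ ∃ N : ℕ, ∀ n : ℕ, N ≤ n →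
      c * (n : ℝ) ^ (Real.log 2 / Real.log 6) ≤
          (sepHalf SierpGraph {p : ℕ × ℕ | SierpMem p} n : ℝ) ∧
        (sepHalf SierpGraph {p : ℕ × ℕ | SierpMem p} n : ℝ) ≤
          C * (n : ℝ) ^ (Real.log 2 / Real.log 6) := by
  refine ⟨1 / 16, 140, by norm_num, by norm_num, 6, fun n hn => ?_⟩
  set α := Real.log 2 / Real.log 6
  have hα : 0 ≤ α := div_nonneg (Real.log_nonneg (by norm_num)) (Real.log_nonneg (by norm_num))
  set ℓ := Nat.log 6 n
  have h6ℓ : 6 ^ ℓ ≤ n := Nat.pow_log_le_self 6 (by omega)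
  have hn6 : n < 6 ^ (ℓ + 1) := Nat.lt_pow_succ_log_self (by norm_num) n
  have hnα : (2 : ℝ) ^ ℓ ≤ (n : ℝ) ^ α ∧ (n : ℝ) ^ α ≤ 2 * 2 ^ ℓ := by
    rw [← pow_succ', ← six_pow_rpow, ← six_pow_rpow]
    exact ⟨Real.rpow_le_rpow (by positivity) (by exact_mod_cast h6ℓ) hα,
      Real.rpow_le_rpow (by positivity) (by exact_mod_cast hn6.le) hα⟩
  have hlow : (2 : ℝ) ^ ℓ ≤ 8 * sepHalf SierpGraph {p | SierpMem p} n := by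
    exact_mod_cast two_pow_le_eight_mul_sepHalf
      (Nat.le_log_of_pow_le (by norm_num) (by simpa using hn)) h6ℓ
  have hupp : (sepHalf SierpGraph {p | SierpMem p} n : ℝ) ≤ 140 * 2 ^ ℓ := by
    exact_mod_cast sepHalf_le_of_lt_six_pow hn6
  constructor <;> linarith [hnα.1, hnα.2]
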